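/- For the sequence Λ* with λ_n* = n + 1/(n·2^{2|n|}) (n ∈ ℤ\{0}), the counting function satisfies n_{Λ*}(x) = n on the interval (n + 1/(n·2^{2n}), n+1 + 1/((n+1)·2^{2(n+1)})) for each n ≥ 1, and the series ∑_{n≥1} ∫ over this interval of (x−n)/(1+x²) dx converges (bounded by a constant times ∑_{n≥1} 1/(1+n²)). -/
import Mathlib


open MeasureTheory Complex Filter ComplexConjugate ENNReal

noncomputable section

/-- The counting function `n_Λ` of a set `Λ ⊆ ℝ`. -/
def countFun (Λ : Set ℝ) (x : ℝ) : ℤ :=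
  if 0 ≤ x then ((Λ ∩ Set.Icc 0 x).ncard : ℤ) else -(((Λ ∩ Set.Ioo x 0).ncard : ℤ))

/-- `Λ` is strongly `a`-regular: `∫ |n_Λ(x) - ax|/(1+x²) dx < ∞`. -/
def StronglyRegular (a : ℝ) (Λ : Set ℝ) : Prop :=
  Integrable (fun x : ℝ => |((countFun Λ x : ℝ)) - a * x| / (1 + x ^ 2)) volume

/-- The interior Beurling–Malliavin density of `Λ ⊆ ℝ`. -/
def Dstar (Λ : Set ℝ) : ℝ := sSup {a : ℝ | ∃ Λ' ⊆ Λ, StronglyRegular a Λ'}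

/-- The exterior Beurling–Malliavin density of `Λ ⊆ ℝ`. -/
def DstarExt (Λ : Set ℝ) : ℝ := sInf {a : ℝ | ∃ Λ' : Set ℝ, Λ ⊆ Λ' ∧ StronglyRegular a Λ'}

/-- The map `λ ↦ λ* = [Re(1/λ)]⁻¹`. -/
def starMap (z : ℂ) : ℝ := ((1 / z).re)⁻¹

/-- Interior BM density of a sequence in `ℂ₊`, via `Λ*`. -/
def DstarC (Λ : Set ℂ) : ℝ := Dstar (starMap '' Λ)

/-- Exterior BM density of a sequence in `ℂ₊`, via `Λ*`. -/
def DstarExtC (Λ : Set ℂ) : ℝ := DstarExt (starMap '' Λ)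

/-- The point `λ_n* = n + 1/(n·2^{2|n|})` of the sequence `Λ*`. -/
def edge (n : ℤ) : ℝ := (n : ℝ) + 1 / ((n : ℝ) * (2 : ℝ) ^ (2 * |n|))


lemma edge_gt {n : ℤ} (hn : 1 ≤ n) : (n:ℝ) < edge n := by
  have h1 : (0:ℝ) < (n:ℝ) := by exact_mod_cast hn.trans_lt' (by norm_num)
  have h2 : (0:ℝ) < (2:ℝ) ^ (2 * |n|) := zpow_pos (by norm_num) _
  unfold edge
  nlinarith [one_div_pos.mpr (mul_pos h1 h2)]

lemma edge_le {n : ℤ} (hn : 1 ≤ n) : edge n ≤ (n:ℝ) + 1/4 := by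
  have habs : |n| = n := abs_of_pos (by omega)
  have h1 : (1:ℝ) ≤ (n:ℝ) := by exact_mod_cast hn
  have h4 : (4:ℝ) ≤ (2:ℝ) ^ (2 * |n|) := by
    rw [habs]
    have : (2:ℝ) ^ (2:ℤ) ≤ (2:ℝ) ^ (2 * n) := by
      apply zpow_le_zpow_right₀ (by norm_num) (by omega)
    norm_num at this; linarith
  have h5 : (4:ℝ) ≤ (n:ℝ) * (2:ℝ) ^ (2 * |n|) := by nlinarith
  have : 1 / ((n:ℝ) * (2:ℝ) ^ (2 * |n|)) ≤ 1/4 := by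
    apply one_div_le_one_div_of_le (by norm_num) h5
  unfold edge; linarith

lemma edge_strictMono {m k : ℤ} (hm : 1 ≤ m) (hmk : m < k) : edge m < edge k := by
  have h1 := edge_le hm
  have h2 := edge_gt (by omega : 1 ≤ k)
  have : (m:ℝ) + 1 ≤ (k:ℝ) := by exact_mod_cast hmk
  linarith

lemma edge_mono {m k : ℤ} (hm : 1 ≤ m) (hmk : m ≤ k) : edge m ≤ edge k := by
  rcases eq_or_lt_of_le hmk with h | h
  · rw [h]
  · exact (edge_strictMono hm h).le

lemma edge_neg {n : ℤ} (hn : n ≤ -1) : edge n < 0 := by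
  have h1 : (n:ℝ) < 0 := by exact_mod_cast hn.trans_lt (by norm_num)
  have h2 : (0:ℝ) < (2:ℝ) ^ (2 * |n|) := zpow_pos (by norm_num) _
  have : 1 / ((n:ℝ) * (2:ℝ) ^ (2 * |n|)) < 0 :=
    one_div_neg.mpr (mul_neg_of_neg_of_pos h1 h2)
  unfold edge; linarith

lemma integral_bound {n : ℤ} (hn : 1 ≤ n) :
    (∫ x in edge n..edge (n + 1), (x - (n : ℝ)) / (1 + x ^ 2)) ≤ 4 / (1 + (n : ℝ) ^ 2) := by
  have hn1 : (1:ℤ) ≤ n + 1 := by omega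
  have hab : edge n ≤ edge (n+1) := edge_mono hn (by omega)
  have ha : (n:ℝ) < edge n := edge_gt hn
  have hb : edge (n+1) ≤ (n:ℝ) + 1 + 1/4 := by
    have := edge_le hn1; push_cast at this ⊢; linarith
  have hnR : (1:ℝ) ≤ (n:ℝ) := by exact_mod_cast hn
  have hcont : Continuous fun x : ℝ => (x - (n:ℝ)) / (1 + x ^ 2) := by
    apply Continuous.div (by continuity) (by continuity)
    intro x; positivity
  have hint : IntervalIntegrable (fun x : ℝ => (x - (n:ℝ)) / (1 + x ^ 2))
      MeasureTheory.volume (edge n) (edge (n+1)) := hcont.intervalIntegrable _ _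
  have hintc : IntervalIntegrable (fun _ : ℝ => 2 / (1 + (n:ℝ) ^ 2))
      MeasureTheory.volume (edge n) (edge (n+1)) := intervalIntegrable_const
  have hmono : ∀ x ∈ Set.Icc (edge n) (edge (n+1)),
      (x - (n:ℝ)) / (1 + x ^ 2) ≤ 2 / (1 + (n:ℝ) ^ 2) := by
    intro x hx
    have hx1 : (n:ℝ) ≤ x := ha.le.trans hx.1
    have hx2 : x - (n:ℝ) ≤ 2 := by linarith [hx.2]
    have hsq : (n:ℝ) ^ 2 ≤ x ^ 2 := by nlinarith
    exact div_le_div₀ (by norm_num) hx2 (by positivity) (by linarith)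
  have := intervalIntegral.integral_mono_on hab hint hintc hmono
  rw [intervalIntegral.integral_const, smul_eq_mul] at this
  have hlen : edge (n+1) - edge n ≤ 2 := by linarith
  have hc : (0:ℝ) ≤ 2 / (1 + (n:ℝ) ^ 2) := by positivity
  calc (∫ x in edge n..edge (n + 1), (x - (n : ℝ)) / (1 + x ^ 2))
      ≤ (edge (n+1) - edge n) * (2 / (1 + (n:ℝ) ^ 2)) := this
    _ ≤ 2 * (2 / (1 + (n:ℝ) ^ 2)) := mul_le_mul_of_nonneg_right hlen hc
    _ = 4 / (1 + (n:ℝ) ^ 2) := by ring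

lemma count_eq (Λs : Set ℝ) (hΛs : Λs = {x : ℝ | ∃ n : ℤ, n ≠ 0 ∧ x = edge n})
    {n : ℤ} (hn : 1 ≤ n) {x : ℝ} (hx : x ∈ Set.Ioo (edge n) (edge (n + 1))) :
    countFun Λs x = n := by
  have hnR : (1:ℝ) ≤ (n:ℝ) := by exact_mod_cast hn
  have hax : edge n < x := hx.1
  have hxb : x < edge (n+1) := hx.2
  have hx0 : 0 ≤ x := by linarith [edge_gt hn]
  rw [countFun, if_pos hx0]
  have hset : Λs ∩ Set.Icc 0 x = edge '' (Set.Icc 1 n) := by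
    ext y
    simp only [hΛs, Set.mem_inter_iff, Set.mem_setOf_eq, Set.mem_Icc, Set.mem_image]
    constructor
    · rintro ⟨⟨m, hm0, rfl⟩, hy0, hyx⟩
      have hm1 : 1 ≤ m := by
        by_contra h
        have : m ≤ -1 := by omega
        linarith [edge_neg this]
      have hmn : m ≤ n := by
        by_contra h
        have : edge (n+1) ≤ edge m := edge_mono (by omega) (by omega)
        linarith
      exact ⟨m, ⟨hm1, hmn⟩, rfl⟩
    · rintro ⟨m, ⟨h1, h2⟩, rfl⟩
      have h3 : edge m ≤ edge n := edge_mono h1 h2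
      have h4 : (0:ℝ) < edge m := by
        have : (1:ℝ) ≤ (m:ℝ) := by exact_mod_cast h1
        linarith [edge_gt h1]
      exact ⟨⟨m, by omega, rfl⟩, h4.le, by linarith⟩
  have hinj : Set.InjOn edge (Set.Icc 1 n) := by
    intro a ha b hb hab
    by_contra h
    rcases lt_or_gt_of_ne h with h' | h'
    · exact absurd hab (edge_strictMono ha.1 h').ne
    · exact absurd hab.symm (edge_strictMono hb.1 h').ne
  rw [hset, Set.ncard_image_of_injOn hinj, ← Finset.coe_Icc, Set.ncard_coe_finset,
    Int.card_Icc]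
  omega

/-- For `Λ* = {n + 1/(n·2^{2|n|}) : n ∈ ℤ, n ≠ 0}`: the counting function equals `n` on
`(λ_n*, λ_{n+1}*)` for `n ≥ 1`, each integral `∫_{λ_n*}^{λ_{n+1}*} (x-n)/(1+x²) dx` is
`O(1/(1+n²))`, and the series of these integrals converges. -/
theorem stmt14
    (Λs : Set ℝ) (hΛs : Λs = {x : ℝ | ∃ n : ℤ, n ≠ 0 ∧ x = edge n}) :
    (∀ n : ℤ, 1 ≤ n → ∀ x ∈ Set.Ioo (edge n) (edge (n + 1)), countFun Λs x = n) ∧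
    (∃ C : ℝ, 0 < C ∧ ∀ n : ℤ, 1 ≤ n →
      (∫ x in edge n..edge (n + 1), (x - (n : ℝ)) / (1 + x ^ 2)) ≤ C / (1 + (n : ℝ) ^ 2)) ∧
    Summable (fun n : ℕ =>
      ∫ x in edge ((n : ℤ) + 1)..edge ((n : ℤ) + 2), (x - ((n : ℝ) + 1)) / (1 + x ^ 2)) := by
  refine ⟨fun n hn x hx => count_eq Λs hΛs hn hx, ⟨4, by norm_num, fun n hn => integral_bound hn⟩, ?_⟩
  have hsum : Summable (fun n : ℕ => 4 / ((n:ℝ) + 1) ^ 2) := by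
    have h1 : Summable (fun n : ℕ => 1 / ((n:ℝ)) ^ 2) :=
      Real.summable_one_div_nat_pow.mpr (by norm_num)
    have h2 := (summable_nat_add_iff 1).mpr h1
    exact (h2.mul_left 4).congr (fun n => by push_cast; ring)
  apply Summable.of_nonneg_of_le _ _ hsum
  · intro n
    apply intervalIntegral.integral_nonneg (edge_mono (by omega) (by omega))
    intro x hx
    have h1 : ((n:ℤ):ℝ) + 1 < edge ((n:ℤ)+1) := by
      have := edge_gt (n := (n:ℤ)+1) (by omega); push_cast at this ⊢; linarith
    have : (n:ℝ) + 1 ≤ x := by push_cast at h1; linarith [hx.1]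
    exact div_nonneg (by linarith) (by positivity)
  · intro n
    have hb := integral_bound (n := (n:ℤ)+1) (by omega)
    have hcast : (((n:ℤ)+1 : ℤ) : ℝ) = (n:ℝ) + 1 := by push_cast; ring
    rw [hcast] at hb
    have h2 : ((n:ℤ)+1)+1 = (n:ℤ)+2 := by ring
    rw [h2] at hb
    calc (∫ x in edge ((n : ℤ) + 1)..edge ((n : ℤ) + 2), (x - ((n : ℝ) + 1)) / (1 + x ^ 2))
        ≤ 4 / (1 + ((n:ℝ)+1) ^ 2) := hb
      _ ≤ 4 / ((n:ℝ) + 1) ^ 2 := by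
          apply div_le_div_of_nonneg_left (by norm_num) (by positivity) (by nlinarith)
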